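/- Let 1 < p ≤ 2 and let T : X → Y be a bounded linear operator with martingale type p. Then there exists an equivalent norm |||·||| on Y such that T, considered as an operator from X into (Y, |||·|||), is uniformly p-smooth. -/

import Mathlib

open MeasureTheory Finset

/-- The `L_q` norm of a function on `[0,1)`: `(∫₀¹ ‖f t‖^q dt)^(1/q)`. -/
noncomputable def LqNorm {X : Type*} [NormedAddCommGroup X] (q : ℝ) (f : ℝ → X) : ℝ :=
  (∫ t in (0:ℝ)..1, ‖f t‖ ^ q) ^ (1/q)

/-- `f : [0,1) → X` is measurable with respect to the dyadic σ-algebra `F_k`,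
i.e. constant on each dyadic interval `[i/2^k, (i+1)/2^k)`. -/
def DyadicMeas {X : Type*} (k : ℕ) (f : ℝ → X) : Prop :=
  ∀ s t : ℝ, s ∈ Set.Ico (0:ℝ) 1 → t ∈ Set.Ico (0:ℝ) 1 →
    ⌊s * 2 ^ k⌋ = ⌊t * 2 ^ k⌋ → f s = f t

/-- `d` is a dyadic martingale difference at level `k`: it is `F_k`-measurable and
its value on the left half of each level-`(k-1)` dyadic interval is the negative of
its value on the right half (i.e. `E(d | F_{k-1}) = 0`). -/
def IsDyadicDiff {X : Type*} [NormedAddCommGroup X] (k : ℕ) (d : ℝ → X) : Prop :=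
  DyadicMeas k d ∧
    ∀ j : ℕ, 2 * j + 1 < 2 ^ k →
      d ((2 * j : ℝ) / 2 ^ k) = - d ((2 * j + 1 : ℝ) / 2 ^ k)

/-- `T` has strong martingale type `p` with constant `c`. -/
def StrongMartType {X Y : Type*} [NormedAddCommGroup X] [NormedSpace ℝ X]
    [NormedAddCommGroup Y] [NormedSpace ℝ Y] (T : X →L[ℝ] Y) (p c : ℝ) : Prop :=
  ∀ (n : ℕ) (d : ℕ → ℝ → X), (∀ k, 1 ≤ k → k ≤ n → IsDyadicDiff k (d k)) →
    ∀ y : Y,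
      LqNorm p (fun t => y + ∑ k ∈ Finset.Icc 1 n, T (d k t)) ≤
        (‖y‖ ^ p + c ^ p * ∑ k ∈ Finset.Icc 1 n, LqNorm p (d k) ^ p) ^ (1/p)

/-- `T` has strong martingale cotype `q` with constant `c`. -/
def StrongMartCotype {X Y : Type*} [NormedAddCommGroup X] [NormedSpace ℝ X]
    [NormedAddCommGroup Y] [NormedSpace ℝ Y] (T : X →L[ℝ] Y) (q c : ℝ) : Prop :=
  ∀ (n : ℕ) (x : X) (d : ℕ → ℝ → X), d 0 = (fun _ => x) →
    (∀ k, 1 ≤ k → k ≤ n → IsDyadicDiff k (d k)) →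
      (‖x‖ ^ q + c⁻¹ ^ q *
          ∑ k ∈ Finset.Icc 1 n, LqNorm q (fun t => T (d k t)) ^ q) ^ (1/q) ≤
        LqNorm q (fun t => ∑ k ∈ Finset.range (n+1), d k t)

/-- `T` has (ordinary) martingale type `p` with constant `c`. -/
def MartType {X Y : Type*} [NormedAddCommGroup X] [NormedSpace ℝ X]
    [NormedAddCommGroup Y] [NormedSpace ℝ Y] (T : X →L[ℝ] Y) (p c : ℝ) : Prop :=
  ∀ (n : ℕ) (d : ℕ → ℝ → X), DyadicMeas 0 (d 0) →
    (∀ k, 1 ≤ k → k ≤ n → IsDyadicDiff k (d k)) →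
      LqNorm p (fun t => ∑ k ∈ Finset.range (n+1), T (d k t)) ≤
        c * (∑ k ∈ Finset.range (n+1), LqNorm p (d k) ^ p) ^ (1/p)

/-- `T` has (ordinary) martingale cotype `q` with constant `c`. -/
def MartCotype {X Y : Type*} [NormedAddCommGroup X] [NormedSpace ℝ X]
    [NormedAddCommGroup Y] [NormedSpace ℝ Y] (T : X →L[ℝ] Y) (q c : ℝ) : Prop :=
  ∀ (n : ℕ) (d : ℕ → ℝ → X), DyadicMeas 0 (d 0) →
    (∀ k, 1 ≤ k → k ≤ n → IsDyadicDiff k (d k)) →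
      (∑ k ∈ Finset.range (n+1), LqNorm q (fun t => T (d k t)) ^ q) ^ (1/q) ≤
        c * LqNorm q (fun t => ∑ k ∈ Finset.range (n+1), d k t)

/-- `T` is uniformly `q`-convex with constant `c`. -/
def UnifQConvex {X Y : Type*} [NormedAddCommGroup X] [NormedSpace ℝ X]
    [NormedAddCommGroup Y] [NormedSpace ℝ Y] (T : X →L[ℝ] Y) (q c : ℝ) : Prop :=
  ∀ xp xm : X,
    ‖(2:ℝ)⁻¹ • (T xp - T xm)‖ ≤
      c * ((‖xp‖ ^ q + ‖xm‖ ^ q) / 2 - ‖(2:ℝ)⁻¹ • (xp + xm)‖ ^ q) ^ (1/q)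

/-- `T` is uniformly `p`-smooth with constant `c`. -/
def UnifPSmooth {X Y : Type*} [NormedAddCommGroup X] [NormedSpace ℝ X]
    [NormedAddCommGroup Y] [NormedSpace ℝ Y] (T : X →L[ℝ] Y) (p c : ℝ) : Prop :=
  ∀ (x : X) (y : Y),
    ((‖y + T x‖ ^ p + ‖y - T x‖ ^ p) / 2 - ‖y‖ ^ p) ^ (1/p) ≤ c * ‖x‖


lemma my_floor_coarsen {s t : ℝ} (hs : 0 ≤ s) (ht : 0 ≤ t) {k n : ℕ} (hkn : k ≤ n)
    (h : ⌊s * 2 ^ n⌋ = ⌊t * 2 ^ n⌋) : ⌊s * 2 ^ k⌋ = ⌊t * 2 ^ k⌋ := by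
  have h2 : (0:ℝ) < 2 ^ (n - k) := by positivity
  have hpow : (2:ℝ) ^ n = 2 ^ (n - k) * 2 ^ k := by
    rw [← pow_add]; congr 1; omega
  have hs2 : s * 2 ^ k = s * 2 ^ n / 2 ^ (n - k) := by rw [hpow]; field_simp
  have ht2 : t * 2 ^ k = t * 2 ^ n / 2 ^ (n - k) := by rw [hpow]; field_simp
  have hcast : ((2 ^ (n - k) : ℕ) : ℝ) = (2:ℝ) ^ (n - k) := by push_cast; ring
  have hfl : (⌊s * 2 ^ n⌋₊ : ℤ) = ⌊s * 2 ^ n⌋ := Int.natCast_floor_eq_floor (by positivity)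
  have hfl' : (⌊t * 2 ^ n⌋₊ : ℤ) = ⌊t * 2 ^ n⌋ := Int.natCast_floor_eq_floor (by positivity)
  have hnat : ⌊s * 2 ^ n⌋₊ = ⌊t * 2 ^ n⌋₊ := by
    have := hfl.trans (h.trans hfl'.symm)
    exact_mod_cast this
  rw [← Int.natCast_floor_eq_floor (by positivity : (0:ℝ) ≤ s * 2 ^ k),
    ← Int.natCast_floor_eq_floor (by positivity : (0:ℝ) ≤ t * 2 ^ k)]
  congr 1
  rw [hs2, ht2, ← hcast, Nat.floor_div_natCast, Nat.floor_div_natCast, hnat]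

lemma DyadicMeas.mono {X : Type*} {k n : ℕ} (hkn : k ≤ n) {f : ℝ → X}
    (hf : DyadicMeas k f) : DyadicMeas n f := by
  intro s t hs ht h
  exact hf s t hs ht (my_floor_coarsen hs.1 ht.1 hkn h)

lemma my_dyadic_const {m : ℕ} {g : ℝ → ℝ} (hg : DyadicMeas m g) {i : ℕ} (hi : i < 2 ^ m)
    {t : ℝ} (h1 : (i:ℝ)/2^m ≤ t) (h2 : t < ((i:ℝ)+1)/2^m) : g t = g ((i:ℝ)/2^m) := by
  have h2m : (0:ℝ) < 2 ^ m := by positivity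
  have hti : (i:ℝ) ≤ t * 2 ^ m := by rw [← div_le_iff₀ h2m]; exact h1
  have hti2 : t * 2 ^ m < (i:ℝ) + 1 := by rw [← lt_div_iff₀ h2m]; exact h2
  have hi1 : ((i:ℝ)+1) ≤ 2 ^ m := by exact_mod_cast Nat.succ_le_of_lt hi
  have htmem : t ∈ Set.Ico (0:ℝ) 1 := by
    constructor
    · exact le_trans (by positivity) h1
    · calc t < ((i:ℝ)+1)/2^m := h2
        _ ≤ 1 := by rw [div_le_one h2m]; exact hi1
  have himem : (i:ℝ)/2^m ∈ Set.Ico (0:ℝ) 1 := by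
    constructor
    · positivity
    · rw [div_lt_one h2m]; exact_mod_cast hi
  have hfl1 : ⌊t * 2 ^ m⌋ = (i:ℤ) := by
    rw [Int.floor_eq_iff]
    constructor <;> push_cast
    · exact hti
    · exact hti2
  have hfl2 : ⌊(i:ℝ)/2^m * 2 ^ m⌋ = (i:ℤ) := by
    rw [div_mul_cancel₀ _ (ne_of_gt h2m)]
    exact_mod_cast Int.floor_natCast i
  exact (hg ((i:ℝ)/2^m) t himem htmem (hfl2.trans hfl1.symm)).symm

lemma my_piece_int {m : ℕ} {g : ℝ → ℝ} (hg : DyadicMeas m g) {i : ℕ} (hi : i < 2 ^ m) :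
    IntervalIntegrable g volume ((i:ℝ)/2^m) (((i:ℝ)+1)/2^m) ∧
      ∫ t in ((i:ℝ)/2^m)..(((i:ℝ)+1)/2^m), g t = ((2:ℝ)^m)⁻¹ * g ((i:ℝ)/2^m) := by
  have h2m : (0:ℝ) < 2 ^ m := by positivity
  have hle : (i:ℝ)/2^m ≤ ((i:ℝ)+1)/2^m := by
    gcongr
    linarith
  have hne : ∀ᵐ t : ℝ ∂volume, t ≠ ((i:ℝ)+1)/2^m := by
    rw [ae_iff]
    push_neg
    rw [Set.setOf_eq_eq_singleton]
    exact Real.volume_singleton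
  have hae : ∀ᵐ t ∂(volume : Measure ℝ),
      t ∈ Set.Ioc ((i:ℝ)/2^m) (((i:ℝ)+1)/2^m) → g t = g ((i:ℝ)/2^m) := by
    filter_upwards [hne] with t htne hmem
    exact my_dyadic_const hg hi hmem.1.le (lt_of_le_of_ne hmem.2 htne)
  have haeu : ∀ᵐ t ∂(volume : Measure ℝ),
      t ∈ Set.uIoc ((i:ℝ)/2^m) (((i:ℝ)+1)/2^m) → g t = g ((i:ℝ)/2^m) := by
    rw [Set.uIoc_of_le hle]; exact hae
  constructor
  · rw [intervalIntegrable_iff]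
    have hconst : IntegrableOn (fun _ => g ((i:ℝ)/2^m))
        (Set.uIoc ((i:ℝ)/2^m) (((i:ℝ)+1)/2^m)) volume := by
      apply (integrableOn_const_iff enorm_ne_top).mpr
      right
      rw [Set.uIoc_of_le hle]
      exact measure_Ioc_lt_top
    apply hconst.congr
    rw [Set.uIoc_of_le hle]
    rw [Filter.EventuallyEq]
    rw [ae_restrict_iff' measurableSet_Ioc]
    filter_upwards [hae] with t h ht
    exact (h ht).symm
  · rw [intervalIntegral.integral_congr_ae haeu, intervalIntegral.integral_const, smul_eq_mul]
    congr 1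
    field_simp
    ring

lemma my_dyadic_integral {m : ℕ} {g : ℝ → ℝ} (hg : DyadicMeas m g) :
    IntervalIntegrable g volume 0 1 ∧
      ∫ t in (0:ℝ)..1, g t = ((2:ℝ)^m)⁻¹ * ∑ i ∈ range (2^m), g ((i:ℝ)/2^m) := by
  have h2m : (0:ℝ) < 2 ^ m := by positivity
  set a : ℕ → ℝ := fun i => (i:ℝ)/2^m with ha
  have hcast : ∀ i : ℕ, a (i+1) = ((i:ℝ)+1)/2^m := by
    intro i; simp only [ha]; push_cast; ring
  have hpieces : ∀ k, k < 2^m → IntervalIntegrable g volume (a k) (a (k+1)) := by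
    intro k hk
    rw [hcast k]
    exact (my_piece_int hg hk).1
  have h0 : a 0 = 0 := by simp [ha]
  have h1 : a (2^m) = 1 := by
    simp only [ha]
    rw [div_eq_one_iff_eq (ne_of_gt h2m)]
    push_cast
    ring
  constructor
  · have := IntervalIntegrable.trans_iterate hpieces
    rwa [h0, h1] at this
  · have hsum := intervalIntegral.sum_integral_adjacent_intervals hpieces
    rw [h0, h1] at hsum
    rw [← hsum, Finset.mul_sum]
    apply Finset.sum_congr rfl
    intro i hi
    rw [Finset.mem_range] at hi
    rw [hcast i]
    exact (my_piece_int hg hi).2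

set_option linter.unusedSectionVars false
set_option linter.unusedVariables false
section Aux

variable {X Y : Type*} [NormedAddCommGroup X] [NormedSpace ℝ X]
  [NormedAddCommGroup Y] [NormedSpace ℝ Y]

lemma my_int_nonneg (p : ℝ) (f : ℝ → X) : 0 ≤ ∫ t in (0:ℝ)..1, ‖f t‖ ^ p :=
  intervalIntegral.integral_nonneg zero_le_one fun u _ => Real.rpow_nonneg (norm_nonneg _) p

lemma LqNorm_nonneg (p : ℝ) (f : ℝ → X) : 0 ≤ LqNorm p f :=
  Real.rpow_nonneg (my_int_nonneg p f) _

lemma LqNorm_rpow {p : ℝ} (hp : p ≠ 0) (f : ℝ → X) :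
    LqNorm p f ^ p = ∫ t in (0:ℝ)..1, ‖f t‖ ^ p := by
  rw [LqNorm, one_div, Real.rpow_inv_rpow (my_int_nonneg p f) hp]

lemma LqNorm_zero_fun {p : ℝ} (hp : p ≠ 0) : LqNorm p (fun _ : ℝ => (0:X)) = 0 := by
  rw [LqNorm]
  norm_num [Real.zero_rpow hp]
  exact Real.zero_rpow (inv_ne_zero hp)

lemma my_zero_diff (k : ℕ) : IsDyadicDiff k (fun _ : ℝ => (0:X)) :=
  ⟨fun _ _ _ _ _ => rfl, fun _ _ => neg_zero.symm⟩

lemma my_dm_sum (T : X →L[ℝ] Y) {n : ℕ} {d : ℕ → ℝ → X}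
    (hd : ∀ k ∈ Icc 1 n, DyadicMeas k (d k)) :
    DyadicMeas n (fun t => ∑ k ∈ Icc 1 n, T (d k t)) := by
  intro s t hs ht h
  simp only
  refine Finset.sum_congr rfl fun k hk => ?_
  rw [((hd k hk).mono (mem_Icc.mp hk).2) s t hs ht h]

lemma my_dm_comp {Z W : Type*} {n : ℕ} (h : Z → W) {f : ℝ → Z} (hf : DyadicMeas n f) :
    DyadicMeas n (fun t => h (f t)) := fun s t hs ht hh => congrArg h (hf s t hs ht hh)

noncomputable def Val (T : X →L[ℝ] Y) (p K : ℝ) (y : Y) (n : ℕ) (d : ℕ → ℝ → X) : ℝ :=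
  (∫ t in (0:ℝ)..1, ‖y + ∑ k ∈ Icc 1 n, T (d k t)‖ ^ p) -
    K * ∑ k ∈ Icc 1 n, LqNorm p (d k) ^ p

def Good (n : ℕ) (d : ℕ → ℝ → X) : Prop := ∀ k, 1 ≤ k → k ≤ n → IsDyadicDiff k (d k)

def PhiSet (T : X →L[ℝ] Y) (p K : ℝ) (y : Y) : Set ℝ :=
  {r | ∃ n d, Good n d ∧ r = Val T p K y n d}

lemma good_dm {n : ℕ} {d : ℕ → ℝ → X} (hd : Good n d) :
    ∀ k ∈ Icc 1 n, DyadicMeas k (d k) := fun k hk =>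
  (hd k (mem_Icc.mp hk).1 (mem_Icc.mp hk).2).1

lemma my_norm_mem (T : X →L[ℝ] Y) (p K : ℝ) (y : Y) : ‖y‖ ^ p ∈ PhiSet T p K y := by
  refine ⟨0, fun _ _ => 0, fun k h1 h0 => absurd (h1.trans h0) (by norm_num), ?_⟩
  rw [Val, show Finset.Icc 1 0 = (∅ : Finset ℕ) from rfl]
  simp

end Aux

lemma my_range_succ_sum {M : Type*} [AddCommMonoid M] (f : ℕ → M) (n : ℕ) :
    ∑ k ∈ range (n+1), f k = f 0 + ∑ k ∈ Icc 1 n, f k := by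
  rw [Finset.range_eq_Ico, ← Finset.sum_Ico_consecutive f (Nat.zero_le 1) (by omega)]
  rw [Finset.Ico_add_one_right_eq_Icc]
  simp

lemma my_add_rpow_le {p : ℝ} (hp : 0 ≤ p) {a b : ℝ} (ha : 0 ≤ a) (hb : 0 ≤ b) :
    (a+b)^p ≤ 2^p * a^p + 2^p * b^p := by
  have hm : 0 ≤ max a b := le_trans ha (le_max_left a b)
  have h1 : a + b ≤ 2 * max a b := by
    rcases le_total a b with h | h
    · have := max_eq_right h; rw [this]; linarith
    · have := max_eq_left h; rw [this]; linarith
  calc (a+b)^p ≤ (2*max a b)^p := Real.rpow_le_rpow (by positivity) h1 hp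
    _ = 2^p * (max a b)^p := Real.mul_rpow (by norm_num) hm
    _ ≤ 2^p*a^p + 2^p*b^p := by
        have h2 : (0:ℝ) ≤ 2^p := Real.rpow_nonneg (by norm_num) p
        rcases le_total a b with h | h
        · rw [max_eq_right h]
          have : (0:ℝ) ≤ 2^p * a^p := mul_nonneg h2 (Real.rpow_nonneg ha p)
          linarith
        · rw [max_eq_left h]
          have : (0:ℝ) ≤ 2^p * b^p := mul_nonneg h2 (Real.rpow_nonneg hb p)
          linarith

section UB

variable {X Y : Type*} [NormedAddCommGroup X] [NormedSpace ℝ X]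
  [NormedAddCommGroup Y] [NormedSpace ℝ Y]

lemma my_val_le (T : X →L[ℝ] Y) {p c : ℝ} (hp1 : 1 < p) (hc : 0 < c) (hmt : MartType T p c)
    (y : Y) {n : ℕ} {d : ℕ → ℝ → X} (hgood : Good n d) :
    Val T p ((2:ℝ)^p * c^p) y n d ≤ 2^p * ‖y‖^p := by
  have hp0 : (0:ℝ) < p := by linarith
  have hpne : p ≠ 0 := ne_of_gt hp0
  set S : ℝ → Y := fun t => ∑ k ∈ Icc 1 n, T (d k t) with hS
  have hSdm : DyadicMeas n S := my_dm_sum T (good_dm hgood)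
  have hf1 : DyadicMeas n (fun t => ‖y + S t‖^p) := my_dm_comp (fun v : Y => ‖y + v‖^p) hSdm
  have hf2 : DyadicMeas n (fun t => ‖S t‖^p) := my_dm_comp (fun v : Y => ‖v‖^p) hSdm
  have hint1 := (my_dyadic_integral hf1).1
  have hint2 := (my_dyadic_integral hf2).1
  have hpt : ∀ t : ℝ, ‖y + S t‖^p ≤ 2^p*‖y‖^p + 2^p*‖S t‖^p := by
    intro t
    calc ‖y + S t‖^p ≤ (‖y‖ + ‖S t‖)^p :=
          Real.rpow_le_rpow (norm_nonneg _) (norm_add_le _ _) hp0.le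
      _ ≤ _ := my_add_rpow_le hp0.le (norm_nonneg _) (norm_nonneg _)
  have hmono : (∫ t in (0:ℝ)..1, ‖y + S t‖^p) ≤
      ∫ t in (0:ℝ)..1, (2^p*‖y‖^p + 2^p*‖S t‖^p) := by
    apply intervalIntegral.integral_mono_on zero_le_one hint1 ?_ (fun t _ => hpt t)
    exact intervalIntegrable_const.add (hint2.const_mul _)
  have hsplit : (∫ t in (0:ℝ)..1, (2^p*‖y‖^p + 2^p*‖S t‖^p)) =
      2^p*‖y‖^p + 2^p * ∫ t in (0:ℝ)..1, ‖S t‖^p := by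
    rw [intervalIntegral.integral_add intervalIntegrable_const (hint2.const_mul _),
      intervalIntegral.integral_const, intervalIntegral.integral_const_mul]
    simp
  set d' : ℕ → ℝ → X := fun k => if k = 0 then (fun _ => 0) else d k with hd'
  have h0 : DyadicMeas 0 (d' 0) := by intro s t _ _ _; simp [hd']
  have hgood' : ∀ k, 1 ≤ k → k ≤ n → IsDyadicDiff k (d' k) := by
    intro k h1 h2
    simp only [hd', if_neg (by omega : ¬ k = 0)]
    exact hgood k h1 h2
  have hmart := hmt n d' h0 hgood'
  have hsum1 : (fun t => ∑ k ∈ range (n+1), T (d' k t)) = S := by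
    funext t
    rw [my_range_succ_sum]
    simp only [hd', if_pos rfl, map_zero, zero_add, hS]
    refine Finset.sum_congr rfl fun k hk => ?_
    rw [if_neg (by rw [mem_Icc] at hk; omega)]
  have hsum2 : ∑ k ∈ range (n+1), LqNorm p (d' k) ^ p = ∑ k ∈ Icc 1 n, LqNorm p (d k) ^ p := by
    rw [my_range_succ_sum]
    simp only [hd', if_pos rfl]
    rw [LqNorm_zero_fun hpne, Real.zero_rpow hpne, zero_add]
    refine Finset.sum_congr rfl fun k hk => ?_
    rw [if_neg (by rw [mem_Icc] at hk; omega)]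
  rw [hsum1, hsum2] at hmart
  set B := ∑ k ∈ Icc 1 n, LqNorm p (d k)^p with hBdef
  have hB : 0 ≤ B := sum_nonneg fun k _ => Real.rpow_nonneg (LqNorm_nonneg _ _) _
  have h5 : (∫ t in (0:ℝ)..1, ‖S t‖^p) ≤ c^p * B := by
    have h6 := Real.rpow_le_rpow (LqNorm_nonneg p S) hmart hp0.le
    rw [LqNorm_rpow hpne] at h6
    rwa [Real.mul_rpow hc.le (Real.rpow_nonneg hB _), one_div,
      Real.rpow_inv_rpow hB hpne] at h6
  rw [Val]
  have h7 := hmono.trans_eq hsplit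
  have h8 : 2^p * (∫ t in (0:ℝ)..1, ‖S t‖^p) ≤ 2^p*(c^p*B) :=
    mul_le_mul_of_nonneg_left h5 (Real.rpow_nonneg (by norm_num) p)
  have hring : 2^p*(c^p*B) = 2^p*c^p*B := by ring
  linarith

end UB

section PhiSec

variable {X Y : Type*} [NormedAddCommGroup X] [NormedSpace ℝ X]
  [NormedAddCommGroup Y] [NormedSpace ℝ Y]

noncomputable def Phi (T : X →L[ℝ] Y) (p K : ℝ) (y : Y) : ℝ := sSup (PhiSet T p K y)

variable (T : X →L[ℝ] Y) {p c : ℝ}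

lemma my_bddAbove (hp1 : 1 < p) (hc : 0 < c) (hmt : MartType T p c) (y : Y) :
    BddAbove (PhiSet T p ((2:ℝ)^p * c^p) y) := by
  refine ⟨2^p * ‖y‖^p, fun r hr => ?_⟩
  obtain ⟨n, d, hg, rfl⟩ := hr
  exact my_val_le T hp1 hc hmt y hg

lemma my_nonempty (p K : ℝ) (y : Y) : (PhiSet T p K y).Nonempty :=
  ⟨_, my_norm_mem T p K y⟩

lemma my_phi_lb (hp1 : 1 < p) (hc : 0 < c) (hmt : MartType T p c) (y : Y) :
    ‖y‖^p ≤ Phi T p ((2:ℝ)^p * c^p) y :=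
  le_csSup (my_bddAbove T hp1 hc hmt y) (my_norm_mem T p _ y)

lemma my_phi_ub (hp1 : 1 < p) (hc : 0 < c) (hmt : MartType T p c) (y : Y) :
    Phi T p ((2:ℝ)^p * c^p) y ≤ 2^p * ‖y‖^p :=
  csSup_le (my_nonempty T p _ y) (fun r hr => by
    obtain ⟨n, d, hg, rfl⟩ := hr
    exact my_val_le T hp1 hc hmt y hg)

lemma my_phi_nonneg (hp1 : 1 < p) (hc : 0 < c) (hmt : MartType T p c) (y : Y) :
    0 ≤ Phi T p ((2:ℝ)^p * c^p) y :=
  le_trans (Real.rpow_nonneg (norm_nonneg y) p) (my_phi_lb T hp1 hc hmt y)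

lemma my_val_le_phi (hp1 : 1 < p) (hc : 0 < c) (hmt : MartType T p c) (y : Y)
    {n : ℕ} {d : ℕ → ℝ → X} (hg : Good n d) :
    Val T p ((2:ℝ)^p * c^p) y n d ≤ Phi T p ((2:ℝ)^p * c^p) y :=
  le_csSup (my_bddAbove T hp1 hc hmt y) ⟨n, d, hg, rfl⟩

lemma my_phi_convex (hp1 : 1 < p) (hc : 0 < c) (hmt : MartType T p c)
    {θ : ℝ} (h0 : 0 ≤ θ) (h1 : θ ≤ 1) (y z : Y) :
    Phi T p ((2:ℝ)^p * c^p) (θ•y + (1-θ)•z) ≤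
      θ * Phi T p ((2:ℝ)^p * c^p) y + (1-θ) * Phi T p ((2:ℝ)^p * c^p) z := by
  have hp0 : (0:ℝ) < p := by linarith
  have hpne : p ≠ 0 := ne_of_gt hp0
  apply csSup_le (my_nonempty T p _ _)
  rintro r ⟨n, d, hg, rfl⟩
  set S : ℝ → Y := fun t => ∑ k ∈ Icc 1 n, T (d k t) with hS
  have hSdm : DyadicMeas n S := my_dm_sum T (good_dm hg)
  have hf0 : DyadicMeas n (fun t => ‖θ•y + (1-θ)•z + S t‖^p) :=
    my_dm_comp (fun v : Y => ‖θ•y + (1-θ)•z + v‖^p) hSdm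
  have hf1 : DyadicMeas n (fun t => ‖y + S t‖^p) := my_dm_comp (fun v : Y => ‖y + v‖^p) hSdm
  have hf2 : DyadicMeas n (fun t => ‖z + S t‖^p) := my_dm_comp (fun v : Y => ‖z + v‖^p) hSdm
  have hint0 := (my_dyadic_integral hf0).1
  have hint1 := (my_dyadic_integral hf1).1
  have hint2 := (my_dyadic_integral hf2).1
  have hpt : ∀ t : ℝ, ‖θ•y + (1-θ)•z + S t‖^p ≤ θ*‖y + S t‖^p + (1-θ)*‖z + S t‖^p := by
    intro t
    have hvec : θ•y + (1-θ)•z + S t = θ•(y + S t) + (1-θ)•(z + S t) := by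
      module
    rw [hvec]
    have hn : ‖θ•(y + S t) + (1-θ)•(z + S t)‖ ≤ θ*‖y + S t‖ + (1-θ)*‖z + S t‖ := by
      calc ‖θ•(y + S t) + (1-θ)•(z + S t)‖ ≤ ‖θ•(y + S t)‖ + ‖(1-θ)•(z + S t)‖ :=
            norm_add_le _ _
        _ = θ*‖y + S t‖ + (1-θ)*‖z + S t‖ := by
            rw [norm_smul, norm_smul, Real.norm_of_nonneg h0,
              Real.norm_of_nonneg (by linarith : (0:ℝ) ≤ 1-θ)]
    calc ‖θ•(y + S t) + (1-θ)•(z + S t)‖^p ≤ (θ*‖y + S t‖ + (1-θ)*‖z + S t‖)^p :=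
          Real.rpow_le_rpow (norm_nonneg _) hn hp0.le
      _ ≤ θ*‖y + S t‖^p + (1-θ)*‖z + S t‖^p := by
          have hcx := (convexOn_rpow hp1.le).2 (Set.mem_Ici.2 (norm_nonneg (y + S t)))
            (Set.mem_Ici.2 (norm_nonneg (z + S t))) h0 (by linarith : (0:ℝ) ≤ 1-θ)
            (by ring : θ + (1-θ) = 1)
          simpa [smul_eq_mul] using hcx
  have hmono : (∫ t in (0:ℝ)..1, ‖θ•y + (1-θ)•z + S t‖^p) ≤
      ∫ t in (0:ℝ)..1, (θ*‖y + S t‖^p + (1-θ)*‖z + S t‖^p) := by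
    apply intervalIntegral.integral_mono_on zero_le_one hint0 ?_ (fun t _ => hpt t)
    exact (hint1.const_mul θ).add (hint2.const_mul (1-θ))
  have hsplit : (∫ t in (0:ℝ)..1, (θ*‖y + S t‖^p + (1-θ)*‖z + S t‖^p)) =
      θ * (∫ t in (0:ℝ)..1, ‖y + S t‖^p) + (1-θ) * ∫ t in (0:ℝ)..1, ‖z + S t‖^p := by
    rw [intervalIntegral.integral_add (hint1.const_mul θ) (hint2.const_mul (1-θ)),
      intervalIntegral.integral_const_mul, intervalIntegral.integral_const_mul]
  have hv1 := my_val_le_phi T hp1 hc hmt y hg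
  have hv2 := my_val_le_phi T hp1 hc hmt z hg
  have hv1' := mul_le_mul_of_nonneg_left hv1 h0
  have hv2' := mul_le_mul_of_nonneg_left hv2 (by linarith : (0:ℝ) ≤ 1-θ)
  rw [Val] at *
  have h9 := hmono.trans_eq hsplit
  set A0 := ∫ t in (0:ℝ)..1, ‖θ•y + (1-θ)•z + S t‖^p
  set A1 := ∫ t in (0:ℝ)..1, ‖y + S t‖^p
  set A2 := ∫ t in (0:ℝ)..1, ‖z + S t‖^p
  set B := ∑ k ∈ Icc 1 n, LqNorm p (d k)^p
  nlinarith [hv1', hv2', h9]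

lemma my_phi_smul_le (hp1 : 1 < p) (hc : 0 < c) (hmt : MartType T p c)
    {l : ℝ} (hl : l ≠ 0) (y : Y) :
    Phi T p ((2:ℝ)^p * c^p) (l • y) ≤ |l|^p * Phi T p ((2:ℝ)^p * c^p) y := by
  have hp0 : (0:ℝ) < p := by linarith
  have hpne : p ≠ 0 := ne_of_gt hp0
  apply csSup_le (my_nonempty T p _ _)
  rintro r ⟨n, d, hg, rfl⟩
  set d' : ℕ → ℝ → X := fun k t => l⁻¹ • d k t with hd'
  have hg' : Good n d' := by
    intro k h1 h2
    refine ⟨fun s t hs ht hf => ?_, fun j hj => ?_⟩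
    · simp only [hd']
      rw [(hg k h1 h2).1 s t hs ht hf]
    · simp only [hd']
      rw [(hg k h1 h2).2 j hj, smul_neg]
  have claim1 : ∀ t : ℝ, ‖l•y + ∑ k ∈ Icc 1 n, T (d k t)‖^p =
      |l|^p * ‖y + ∑ k ∈ Icc 1 n, T (d' k t)‖^p := by
    intro t
    have hv : l•y + ∑ k ∈ Icc 1 n, T (d k t) = l • (y + ∑ k ∈ Icc 1 n, T (d' k t)) := by
      rw [smul_add]
      congr 1
      rw [Finset.smul_sum]
      refine Finset.sum_congr rfl fun k _ => ?_
      show T (d k t) = l • T (l⁻¹ • d k t)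
      rw [← _root_.map_smul T l, smul_inv_smul₀ hl]
    rw [hv, norm_smul, Real.norm_eq_abs, Real.mul_rpow (abs_nonneg l) (norm_nonneg _)]
  have claim2 : ∀ k, LqNorm p (d k) ^ p = |l|^p * LqNorm p (d' k) ^ p := by
    intro k
    rw [LqNorm_rpow hpne, LqNorm_rpow hpne]
    have hpt : ∀ t : ℝ, ‖d k t‖^p = |l|^p * ‖d' k t‖^p := by
      intro t
      have : d k t = l • d' k t := by
        simp only [hd', smul_inv_smul₀ hl]
      rw [this, norm_smul, Real.norm_eq_abs, Real.mul_rpow (abs_nonneg l) (norm_nonneg _)]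
    simp_rw [hpt]
    rw [intervalIntegral.integral_const_mul]
  have hval : Val T p ((2:ℝ)^p * c^p) (l•y) n d = |l|^p * Val T p ((2:ℝ)^p * c^p) y n d' := by
    rw [Val, Val]
    simp_rw [claim1]
    rw [intervalIntegral.integral_const_mul]
    have : ∑ k ∈ Icc 1 n, LqNorm p (d k)^p = |l|^p * ∑ k ∈ Icc 1 n, LqNorm p (d' k)^p := by
      rw [Finset.mul_sum]
      exact Finset.sum_congr rfl fun k _ => claim2 k
    rw [this]
    ring
  rw [hval]
  exact mul_le_mul_of_nonneg_left (my_val_le_phi T hp1 hc hmt y hg')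
    (Real.rpow_nonneg (abs_nonneg l) p)

lemma my_phi_zero (hp1 : 1 < p) (hc : 0 < c) (hmt : MartType T p c) :
    Phi T p ((2:ℝ)^p * c^p) (0:Y) = 0 := by
  have hpne : p ≠ 0 := by positivity
  have h1 := my_phi_ub T hp1 hc hmt (0:Y)
  have h2 := my_phi_nonneg T hp1 hc hmt (0:Y)
  rw [norm_zero, Real.zero_rpow hpne, mul_zero] at h1
  linarith

end PhiSec

section Combine

lemma my_combine_meas {Z : Type*} {m : ℕ} {fp fm : ℝ → Z}
    (hfp : DyadicMeas m fp) (hfm : DyadicMeas m fm) :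
    DyadicMeas (m+1) (fun t => if ⌊(2:ℝ)*t⌋ = 0 then fp (2*t) else fm (2*t-1)) := by
  have key1 : ∀ u : ℝ, (2*u)*2^m = u*2^(m+1) := fun u => by rw [pow_succ]; ring
  have key2 : ∀ u : ℝ, (2*u-1)*2^m = u*2^(m+1) - ((2^m : ℤ) : ℝ) := fun u => by
    push_cast; rw [pow_succ]; ring
  intro s t hs ht hf
  have h1 : ⌊2*s⌋ = ⌊2*t⌋ := by
    have := my_floor_coarsen hs.1 ht.1 (show 1 ≤ m+1 by omega) hf
    rwa [pow_one, mul_comm s 2, mul_comm t 2] at this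
  by_cases h : ⌊2*s⌋ = 0
  · have h' : ⌊2*t⌋ = 0 := h1 ▸ h
    simp only [h, h', if_pos rfl, if_true]
    apply hfp (2*s) (2*t) (Int.floor_eq_zero_iff.mp h) (Int.floor_eq_zero_iff.mp h')
    rw [key1, key1, hf]
  · have h' : ¬ ⌊2*t⌋ = 0 := h1 ▸ h
    simp only [h, h', if_false]
    have hs1 : ⌊2*s⌋ = 1 := by
      have hnn : (0:ℤ) ≤ ⌊2*s⌋ := Int.floor_nonneg.mpr (by linarith [hs.1])
      have hlt : ⌊2*s⌋ < 2 := Int.floor_lt.mpr (by push_cast; linarith [hs.2])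
      omega
    have ht1 : ⌊2*t⌋ = 1 := by rw [← h1]; exact hs1
    have hsm : 2*s - 1 ∈ Set.Ico (0:ℝ) 1 := by
      have : (1:ℝ) ≤ 2*s := by exact_mod_cast Int.le_floor.mp (le_of_eq hs1.symm)
      constructor <;> [linarith; linarith [hs.2]]
    have htm : 2*t - 1 ∈ Set.Ico (0:ℝ) 1 := by
      have : (1:ℝ) ≤ 2*t := by exact_mod_cast Int.le_floor.mp (le_of_eq ht1.symm)
      constructor <;> [linarith; linarith [ht.2]]
    apply hfm _ _ hsm htm
    rw [key2, key2, Int.floor_sub_intCast, Int.floor_sub_intCast, hf]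

variable {X : Type*} [NormedAddCommGroup X] [NormedSpace ℝ X]

lemma my_combine_diff {k : ℕ} (hk : 1 ≤ k) {dp dm : ℝ → X}
    (hp : IsDyadicDiff k dp) (hm : IsDyadicDiff k dm) :
    IsDyadicDiff (k+1) (fun t => if ⌊(2:ℝ)*t⌋ = 0 then dp (2*t) else dm (2*t-1)) := by
  refine ⟨my_combine_meas hp.1 hm.1, ?_⟩
  intro j hj
  simp only
  have h2k1 : (2:ℝ)^(k+1) = 2^k * 2 := pow_succ 2 k
  have h2kpos : (0:ℝ) < 2^k := by positivity
  have e1 : 2*((2*(j:ℝ))/2^(k+1)) = (2*(j:ℝ))/2^k := by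
    rw [h2k1]; field_simp
  have e2 : 2*((2*(j:ℝ)+1)/2^(k+1)) = (2*(j:ℝ)+1)/2^k := by
    rw [h2k1]; field_simp
  by_cases h2 : 2*j+1 < 2^k
  · have hfA : ⌊(2:ℝ)*((2*(j:ℝ))/2^(k+1))⌋ = 0 := by
      rw [e1]
      apply Int.floor_eq_zero_iff.mpr
      constructor
      · positivity
      · rw [div_lt_one h2kpos]
        have h' : ((2*j:ℕ):ℝ) < ((2^k:ℕ):ℝ) := by exact_mod_cast (by omega : 2*j < 2^k)
        push_cast at h'
        linarith
    have hfB : ⌊(2:ℝ)*((2*(j:ℝ)+1)/2^(k+1))⌋ = 0 := by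
      rw [e2]
      apply Int.floor_eq_zero_iff.mpr
      constructor
      · positivity
      · rw [div_lt_one h2kpos]
        have h' : ((2*j+1:ℕ):ℝ) < ((2^k:ℕ):ℝ) := by exact_mod_cast h2
        push_cast at h'
        linarith
    rw [if_pos hfA, if_pos hfB, e1, e2]
    exact hp.2 j h2
  · have hdvd : 2 ∣ 2 ^ k := dvd_pow_self 2 (by omega : k ≠ 0)
    have hj2 : 2^k ≤ 2*j := by omega
    have hkk : 2^k = 2*2^(k-1) := by
      rw [← pow_succ']; congr 1; omega
    set j' := j - 2^(k-1) with hj'def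
    have hjge : 2^(k-1) ≤ j := by omega
    have hj'' : j' + 2^(k-1) = j := by omega
    have hjcast : (j:ℝ) = (j':ℝ) + 2^(k-1) := by
      rw [← hj'']; push_cast; ring
    have hPR : (2:ℝ)^k = 2*2^(k-1) := by
      rw [← pow_succ']; congr 1; omega
    have hPpos : (0:ℝ) < 2^(k-1) := by positivity
    have hc1 : ((2^k:ℕ):ℝ) ≤ ((2*j:ℕ):ℝ) := by exact_mod_cast hj2
    have hc2 : ((2*j+1:ℕ):ℝ) < ((2^(k+1):ℕ):ℝ) := by exact_mod_cast hj
    push_cast at hc1 hc2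
    rw [h2k1] at hc2
    have hfA : ⌊(2:ℝ)*((2*(j:ℝ))/2^(k+1))⌋ = 1 := by
      rw [e1, Int.floor_eq_iff]
      constructor
      · push_cast
        rw [le_div_iff₀ h2kpos]
        linarith
      · push_cast
        rw [div_lt_iff₀ h2kpos]
        linarith
    have hfB : ⌊(2:ℝ)*((2*(j:ℝ)+1)/2^(k+1))⌋ = 1 := by
      rw [e2, Int.floor_eq_iff]
      constructor
      · push_cast
        rw [le_div_iff₀ h2kpos]
        linarith
      · push_cast
        rw [div_lt_iff₀ h2kpos]
        linarith
    rw [if_neg (by rw [hfA]; norm_num), if_neg (by rw [hfB]; norm_num)]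
    have f1 : 2*((2*(j:ℝ))/2^(k+1)) - 1 = (2*(j':ℝ))/2^k := by
      rw [e1, hjcast, hPR]
      field_simp
      ring
    have f2 : 2*((2*(j:ℝ)+1)/2^(k+1)) - 1 = (2*(j':ℝ)+1)/2^k := by
      rw [e2, hjcast, hPR]
      field_simp
      ring
    rw [f1, f2]
    exact hm.2 j' (by omega)

lemma my_split_int {m : ℕ} {gp gm : ℝ → ℝ} (hgp : DyadicMeas m gp) (hgm : DyadicMeas m gm) :
    (∫ t in (0:ℝ)..1, (if ⌊(2:ℝ)*t⌋ = 0 then gp (2*t) else gm (2*t-1))) =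
      (1/2) * (∫ t in (0:ℝ)..1, gp t) + (1/2) * ∫ t in (0:ℝ)..1, gm t := by
  have hG := my_combine_meas hgp hgm
  rw [(my_dyadic_integral hG).2]
  have h2 : 2^(m+1) = 2^m + 2^m := by rw [pow_succ, Nat.mul_two]
  rw [h2, Finset.range_eq_Ico,
    ← Finset.sum_Ico_consecutive _ (Nat.zero_le (2^m)) (Nat.le_add_right _ _),
    show Finset.Ico 0 (2^m) = Finset.range (2^m) by rw [Finset.range_eq_Ico],
    Finset.sum_Ico_eq_sum_range]
  simp only [Nat.add_sub_cancel_left]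
  have h2mpos : (0:ℝ) < 2^m := by positivity
  have hterm1 : ∀ i ∈ range (2^m),
      (if ⌊(2:ℝ)*((i:ℝ)/2^(m+1))⌋ = 0 then gp (2*((i:ℝ)/2^(m+1)))
        else gm (2*((i:ℝ)/2^(m+1))-1)) = gp ((i:ℝ)/2^m) := by
    intro i hi
    rw [Finset.mem_range] at hi
    have harg : 2*((i:ℝ)/2^(m+1)) = (i:ℝ)/2^m := by
      rw [pow_succ]; field_simp
    have hfl : ⌊(i:ℝ)/2^m⌋ = 0 := by
      apply Int.floor_eq_zero_iff.mpr
      constructor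
      · positivity
      · rw [div_lt_one h2mpos]; exact_mod_cast hi
    rw [harg, if_pos hfl]
  have hterm2 : ∀ i ∈ range (2^m),
      (if ⌊(2:ℝ)*(((2^m + i : ℕ):ℝ)/2^(m+1))⌋ = 0 then gp (2*(((2^m + i : ℕ):ℝ)/2^(m+1)))
        else gm (2*(((2^m + i : ℕ):ℝ)/2^(m+1))-1)) = gm ((i:ℝ)/2^m) := by
    intro i hi
    rw [Finset.mem_range] at hi
    have harg : 2*(((2^m + i : ℕ):ℝ)/2^(m+1)) = (i:ℝ)/2^m + 1 := by
      push_cast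
      rw [pow_succ]
      field_simp
      ring
    have hfl : ⌊(i:ℝ)/2^m + 1⌋ = 1 := by
      rw [show ((1:ℝ)) = ((1:ℤ):ℝ) by norm_num, Int.floor_add_intCast]
      rw [Int.floor_eq_zero_iff.mpr ⟨by positivity, by rw [div_lt_one h2mpos]; exact_mod_cast hi⟩]
      norm_num
    rw [harg, if_neg (by rw [hfl]; norm_num)]
    congr 1
    ring
  rw [Finset.sum_congr rfl hterm1, Finset.sum_congr rfl hterm2,
    (my_dyadic_integral hgp).2, (my_dyadic_integral hgm).2]
  rw [pow_succ, mul_inv]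
  ring

end Combine

lemma my_Icc_succ_sum {M : Type*} [AddCommMonoid M] (f : ℕ → M) (n : ℕ) :
    ∑ k ∈ Icc 1 (n+1), f k = f 1 + ∑ k ∈ Icc 1 n, f (k+1) := by
  rw [← Finset.Ico_add_one_right_eq_Icc, Finset.sum_Ico_eq_sum_range]
  simp only [Nat.add_sub_cancel]
  rw [Finset.sum_range_succ' (fun k => f (1+k))]
  rw [← Finset.Ico_add_one_right_eq_Icc, Finset.sum_Ico_eq_sum_range]
  simp only [Nat.add_sub_cancel]
  simp only [← add_assoc, add_zero]
  exact add_comm _ _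

section KeySec

variable {X Y : Type*} [NormedAddCommGroup X] [NormedSpace ℝ X]
  [NormedAddCommGroup Y] [NormedSpace ℝ Y]

lemma my_pad (T : X →L[ℝ] Y) (p K : ℝ) (hpne : p ≠ 0) (y : Y) {n : ℕ} {d : ℕ → ℝ → X}
    (hg : Good n d) {m : ℕ} (hm : n ≤ m) :
    ∃ d2 : ℕ → ℝ → X, Good m d2 ∧ Val T p K y m d2 = Val T p K y n d := by
  refine ⟨fun k => if k ≤ n then d k else fun _ => 0, ?_, ?_⟩
  · intro k h1 h2
    by_cases hkn : k ≤ n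
    · simp only [if_pos hkn]; exact hg k h1 hkn
    · simp only [if_neg hkn]; exact my_zero_diff k
  · rw [Val, Val]
    have hs1 : ∀ t : ℝ, ∑ k ∈ Icc 1 m, T ((if k ≤ n then d k else fun _ => 0) t)
        = ∑ k ∈ Icc 1 n, T (d k t) := by
      intro t
      calc ∑ k ∈ Icc 1 m, T ((if k ≤ n then d k else fun _ => 0) t)
          = ∑ k ∈ Icc 1 n, T ((if k ≤ n then d k else fun _ => 0) t) := by
            refine (Finset.sum_subset (Finset.Icc_subset_Icc_right hm) ?_).symm
            intro k hk1 hk2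
            rw [mem_Icc] at hk1
            rw [mem_Icc] at hk2
            push_neg at hk2
            rw [if_neg (by omega : ¬ k ≤ n)]
            exact map_zero T
        _ = ∑ k ∈ Icc 1 n, T (d k t) := by
            refine Finset.sum_congr rfl fun k hk => ?_
            rw [mem_Icc] at hk
            rw [if_pos hk.2]
    have hs2 : ∑ k ∈ Icc 1 m, LqNorm p (if k ≤ n then d k else fun _ => 0) ^ p
        = ∑ k ∈ Icc 1 n, LqNorm p (d k) ^ p := by
      calc ∑ k ∈ Icc 1 m, LqNorm p (if k ≤ n then d k else fun _ => 0) ^ p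
          = ∑ k ∈ Icc 1 n, LqNorm p (if k ≤ n then d k else fun _ => 0) ^ p := by
            refine (Finset.sum_subset (Finset.Icc_subset_Icc_right hm) ?_).symm
            intro k hk1 hk2
            rw [mem_Icc] at hk1
            rw [mem_Icc] at hk2
            push_neg at hk2
            rw [if_neg (by omega : ¬ k ≤ n), LqNorm_zero_fun hpne, Real.zero_rpow hpne]
        _ = ∑ k ∈ Icc 1 n, LqNorm p (d k) ^ p := by
            refine Finset.sum_congr rfl fun k hk => ?_
            rw [mem_Icc] at hk
            rw [if_pos hk.2]
    rw [hs2]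
    congr 1
    have hfun : (fun t => ‖y + ∑ k ∈ Icc 1 m, T ((if k ≤ n then d k else fun _ => 0) t)‖ ^ p)
        = fun t => ‖y + ∑ k ∈ Icc 1 n, T (d k t)‖ ^ p := by
      funext t
      rw [hs1 t]
    rw [hfun]

lemma my_key (T : X →L[ℝ] Y) {p c : ℝ} (hp1 : 1 < p) (hc : 0 < c) (hmt : MartType T p c)
    (x : X) (y : Y) :
    Phi T p ((2:ℝ)^p * c^p) (y + T x) + Phi T p ((2:ℝ)^p * c^p) (y - T x) ≤
      2 * Phi T p ((2:ℝ)^p * c^p) y + 2 * ((2:ℝ)^p * c^p) * ‖x‖^p := by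
  have hp0 : (0:ℝ) < p := by linarith
  have hpne : p ≠ 0 := ne_of_gt hp0
  suffices H : ∀ rp ∈ PhiSet T p ((2:ℝ)^p * c^p) (y + T x),
      ∀ rm ∈ PhiSet T p ((2:ℝ)^p * c^p) (y - T x),
      rp + rm ≤ 2 * Phi T p ((2:ℝ)^p * c^p) y + 2 * ((2:ℝ)^p * c^p) * ‖x‖^p by
    have h1 : Phi T p ((2:ℝ)^p * c^p) (y + T x) ≤
        2 * Phi T p ((2:ℝ)^p * c^p) y + 2 * ((2:ℝ)^p * c^p) * ‖x‖^p -
          Phi T p ((2:ℝ)^p * c^p) (y - T x) := by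
      apply csSup_le (my_nonempty T p _ _)
      intro rp hrp
      have h2 : Phi T p ((2:ℝ)^p * c^p) (y - T x) ≤
          2 * Phi T p ((2:ℝ)^p * c^p) y + 2 * ((2:ℝ)^p * c^p) * ‖x‖^p - rp := by
        apply csSup_le (my_nonempty T p _ _)
        intro rm hrm
        linarith [H rp hrp rm hrm]
      linarith
    linarith
  rintro rp ⟨np, dp, hgp, rfl⟩ rm ⟨nm, dm, hgm, rfl⟩
  obtain ⟨Dp, hgDp, hvp⟩ := my_pad T p ((2:ℝ)^p * c^p) hpne (y + T x) hgp (le_max_left np nm)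
  obtain ⟨Dm, hgDm, hvm⟩ := my_pad T p ((2:ℝ)^p * c^p) hpne (y - T x) hgm (le_max_right np nm)
  rw [← hvp, ← hvm]
  set m := max np nm with hmdef
  set D : ℕ → ℝ → X := fun k t => if k = 1 then (if ⌊(2:ℝ)*t⌋ = 0 then x else -x)
    else (if ⌊(2:ℝ)*t⌋ = 0 then Dp (k-1) (2*t) else Dm (k-1) (2*t-1)) with hD
  have hD1 : ∀ t, D 1 t = if ⌊(2:ℝ)*t⌋ = 0 then x else -x := by
    intro t; simp only [hD, if_pos rfl]
  have hDk : ∀ k, 1 ≤ k → ∀ t, D (k+1) t =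
      if ⌊(2:ℝ)*t⌋ = 0 then Dp k (2*t) else Dm k (2*t-1) := by
    intro k hk1 t
    simp only [hD, if_neg (by omega : ¬ k+1 = 1), Nat.add_sub_cancel]
  have hgD : Good (m+1) D := by
    intro k hk1 hk2
    by_cases hk : k = 1
    · subst hk
      constructor
      · intro s t hs ht hf
        rw [pow_one, mul_comm s 2, mul_comm t 2] at hf
        rw [hD1 s, hD1 t, hf]
      · intro j hj
        have hj0 : j = 0 := by omega
        subst hj0
        rw [hD1, hD1]
        have e1 : (2*((0:ℕ):ℝ))/2^1 = 0 := by norm_num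
        have e2 : (2*((0:ℕ):ℝ)+1)/2^1 = 1/2 := by norm_num
        rw [e1, e2]
        have f1 : ⌊(2:ℝ)*0⌋ = 0 := by norm_num
        have f2 : ⌊(2:ℝ)*(1/2)⌋ = 1 := by norm_num
        rw [if_pos f1, if_neg (by rw [f2]; norm_num), neg_neg]
    · obtain ⟨k', rfl⟩ : ∃ k', k = k'+1 := ⟨k-1, by omega⟩
      have hk' : 1 ≤ k' := by omega
      have : D (k'+1) = fun t => if ⌊(2:ℝ)*t⌋ = 0 then Dp k' (2*t) else Dm k' (2*t-1) :=
        funext (hDk k' hk')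
      rw [this]
      exact my_combine_diff hk' (hgDp k' hk' (by omega)) (hgDm k' hk' (by omega))
  have hFpdm : DyadicMeas m (fun s => ‖y + T x + ∑ k ∈ Icc 1 m, T (Dp k s)‖^p) :=
    my_dm_comp (fun v : Y => ‖y + T x + v‖^p) (my_dm_sum T (good_dm hgDp))
  have hFmdm : DyadicMeas m (fun s => ‖y - T x + ∑ k ∈ Icc 1 m, T (Dm k s)‖^p) :=
    my_dm_comp (fun v : Y => ‖y - T x + v‖^p) (my_dm_sum T (good_dm hgDm))
  have hFeq : (fun t => ‖y + ∑ k ∈ Icc 1 (m+1), T (D k t)‖^p)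
      = fun t => if ⌊(2:ℝ)*t⌋ = 0
          then (fun s => ‖y + T x + ∑ k ∈ Icc 1 m, T (Dp k s)‖^p) (2*t)
          else (fun s => ‖y - T x + ∑ k ∈ Icc 1 m, T (Dm k s)‖^p) (2*t-1) := by
    funext t
    rw [my_Icc_succ_sum (fun k => T (D k t)) m]
    by_cases hfl : ⌊(2:ℝ)*t⌋ = 0
    · rw [if_pos hfl]
      simp only
      have hD1t : D 1 t = x := by rw [hD1 t]; exact if_pos hfl
      have hsum : ∑ k ∈ Icc 1 m, T (D (k+1) t) = ∑ k ∈ Icc 1 m, T (Dp k (2*t)) := by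
        refine Finset.sum_congr rfl fun k hk => ?_
        rw [mem_Icc] at hk
        congr 1
        rw [hDk k hk.1 t]
        exact if_pos hfl
      rw [hD1t, hsum, ← add_assoc]
    · rw [if_neg hfl]
      simp only
      have hD1t : D 1 t = -x := by rw [hD1 t]; exact if_neg hfl
      have hsum : ∑ k ∈ Icc 1 m, T (D (k+1) t) = ∑ k ∈ Icc 1 m, T (Dm k (2*t-1)) := by
        refine Finset.sum_congr rfl fun k hk => ?_
        rw [mem_Icc] at hk
        congr 1
        rw [hDk k hk.1 t]
        exact if_neg hfl
      rw [hD1t, hsum, map_neg, ← add_assoc, ← sub_eq_add_neg]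
  have hIntF : (∫ t in (0:ℝ)..1, ‖y + ∑ k ∈ Icc 1 (m+1), T (D k t)‖^p)
      = (1/2) * (∫ t in (0:ℝ)..1, ‖y + T x + ∑ k ∈ Icc 1 m, T (Dp k t)‖^p)
        + (1/2) * ∫ t in (0:ℝ)..1, ‖y - T x + ∑ k ∈ Icc 1 m, T (Dm k t)‖^p := by
    rw [intervalIntegral.integral_congr (g := fun t => if ⌊(2:ℝ)*t⌋ = 0
          then (fun s => ‖y + T x + ∑ k ∈ Icc 1 m, T (Dp k s)‖^p) (2*t)
          else (fun s => ‖y - T x + ∑ k ∈ Icc 1 m, T (Dm k s)‖^p) (2*t-1))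
        (fun t _ => congrFun hFeq t)]
    exact my_split_int hFpdm hFmdm
  have hLD1 : LqNorm p (D 1) ^ p = ‖x‖^p := by
    rw [LqNorm_rpow hpne]
    have heq : (fun t => ‖D 1 t‖^p) = fun t => if ⌊(2:ℝ)*t⌋ = 0
        then (fun _ : ℝ => ‖x‖^p) (2*t) else (fun _ : ℝ => ‖x‖^p) (2*t-1) := by
      funext t
      by_cases hfl : ⌊(2:ℝ)*t⌋ = 0
      · rw [if_pos hfl]
        have : D 1 t = x := by rw [hD1 t]; exact if_pos hfl
        rw [this]
      · rw [if_neg hfl]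
        have : D 1 t = -x := by rw [hD1 t]; exact if_neg hfl
        rw [this, norm_neg]
    rw [heq, my_split_int (m := m) (gp := fun _ : ℝ => ‖x‖^p) (gm := fun _ : ℝ => ‖x‖^p)
      (fun _ _ _ _ _ => rfl) (fun _ _ _ _ _ => rfl), intervalIntegral.integral_const]
    norm_num
    ring
  have hLDk : ∀ k ∈ Icc 1 m, LqNorm p (D (k+1)) ^ p
      = (1/2) * LqNorm p (Dp k)^p + (1/2) * LqNorm p (Dm k)^p := by
    intro k hk
    rw [mem_Icc] at hk
    rw [LqNorm_rpow hpne, LqNorm_rpow hpne, LqNorm_rpow hpne]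
    have heq : (fun t => ‖D (k+1) t‖^p) = fun t => if ⌊(2:ℝ)*t⌋ = 0
        then (fun s => ‖Dp k s‖^p) (2*t) else (fun s => ‖Dm k s‖^p) (2*t-1) := by
      funext t
      rw [hDk k hk.1 t]
      by_cases hfl : ⌊(2:ℝ)*t⌋ = 0
      · rw [if_pos hfl, if_pos hfl]
      · rw [if_neg hfl, if_neg hfl]
    rw [heq]
    exact my_split_int
      (my_dm_comp (fun v : X => ‖v‖^p) (DyadicMeas.mono hk.2 (hgDp k hk.1 hk.2).1))
      (my_dm_comp (fun v : X => ‖v‖^p) (DyadicMeas.mono hk.2 (hgDm k hk.1 hk.2).1))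
  have hLsum : ∑ k ∈ Icc 1 (m+1), LqNorm p (D k)^p
      = ‖x‖^p + ((1/2) * ∑ k ∈ Icc 1 m, LqNorm p (Dp k)^p
        + (1/2) * ∑ k ∈ Icc 1 m, LqNorm p (Dm k)^p) := by
    rw [my_Icc_succ_sum (fun k => LqNorm p (D k)^p) m, hLD1]
    congr 1
    rw [Finset.sum_congr rfl hLDk, Finset.sum_add_distrib, Finset.mul_sum, Finset.mul_sum]
  have hval : Val T p ((2:ℝ)^p * c^p) y (m+1) D
      = (1/2) * Val T p ((2:ℝ)^p * c^p) (y + T x) m Dp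
        + (1/2) * Val T p ((2:ℝ)^p * c^p) (y - T x) m Dm - ((2:ℝ)^p * c^p)*‖x‖^p := by
    rw [Val, Val, Val, hLsum, hIntF]
    ring
  have hmem : Val T p ((2:ℝ)^p * c^p) y (m+1) D ≤ Phi T p ((2:ℝ)^p * c^p) y :=
    my_val_le_phi T hp1 hc hmt y hgD
  rw [hval] at hmem
  linarith

end KeySec

theorem stmt_16 {X Y : Type*} [NormedAddCommGroup X] [NormedSpace ℝ X] [CompleteSpace X]
    [NormedAddCommGroup Y] [NormedSpace ℝ Y] [CompleteSpace Y]
    (p : ℝ) (hp1 : 1 < p) (hp2 : p ≤ 2) (T : X →L[ℝ] Y)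
    (hT : ∃ c : ℝ, 0 < c ∧ MartType T p c) :
    ∃ (N : Y → ℝ) (a b : ℝ), 0 < a ∧ 0 < b ∧
      (∀ y : Y, a * ‖y‖ ≤ N y ∧ N y ≤ b * ‖y‖) ∧
      (∀ y z : Y, N (y + z) ≤ N y + N z) ∧
      (∀ (l : ℝ) (y : Y), N (l • y) = |l| * N y) ∧
      ∃ c' : ℝ, 0 < c' ∧ ∀ (x : X) (y : Y),
        ((N (y + T x) ^ p + N (y - T x) ^ p) / 2 - N y ^ p) ^ (1/p) ≤ c' * ‖x‖ := by
  obtain ⟨c, hc, hmt⟩ := hT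
  have hp0 : (0:ℝ) < p := by linarith
  have hpne : p ≠ 0 := ne_of_gt hp0
  have hNp : ∀ w : Y, (Phi T p ((2:ℝ)^p * c^p) w ^ (1/p)) ^ p = Phi T p ((2:ℝ)^p * c^p) w :=
    fun w => by rw [one_div, Real.rpow_inv_rpow (my_phi_nonneg T hp1 hc hmt w) hpne]
  have hNcancel : ∀ r : ℝ, 0 ≤ r → (r ^ p) ^ (1/p) = r := fun r hr => by
    rw [← Real.rpow_mul hr, mul_one_div, div_self hpne, Real.rpow_one]
  -- the scaling inequality
  have hsm : ∀ (l : ℝ), l ≠ 0 → ∀ y : Y,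
      Phi T p ((2:ℝ)^p * c^p) (l • y) ^ (1/p) ≤ |l| * Phi T p ((2:ℝ)^p * c^p) y ^ (1/p) := by
    intro l hl y
    calc Phi T p ((2:ℝ)^p * c^p) (l • y) ^ (1/p)
        ≤ (|l|^p * Phi T p ((2:ℝ)^p * c^p) y) ^ (1/p) :=
          Real.rpow_le_rpow (my_phi_nonneg T hp1 hc hmt _)
            (my_phi_smul_le T hp1 hc hmt hl y) (by positivity)
      _ = |l| * Phi T p ((2:ℝ)^p * c^p) y ^ (1/p) := by
          rw [Real.mul_rpow (Real.rpow_nonneg (abs_nonneg l) p)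
            (my_phi_nonneg T hp1 hc hmt y), hNcancel |l| (abs_nonneg l)]
  refine ⟨fun y => Phi T p ((2:ℝ)^p * c^p) y ^ (1/p), 1, 2, one_pos, two_pos, ?_, ?_, ?_, ?_⟩
  · -- bounds
    intro y
    have hlb := my_phi_lb T hp1 hc hmt y
    have hub := my_phi_ub T hp1 hc hmt y
    have hnn := my_phi_nonneg T hp1 hc hmt y
    constructor
    · rw [one_mul]
      calc ‖y‖ = (‖y‖^p)^(1/p) := (hNcancel _ (norm_nonneg y)).symm
        _ ≤ Phi T p ((2:ℝ)^p * c^p) y ^ (1/p) :=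
            Real.rpow_le_rpow (Real.rpow_nonneg (norm_nonneg y) p) hlb (by positivity)
    · calc Phi T p ((2:ℝ)^p * c^p) y ^ (1/p) ≤ (2^p * ‖y‖^p)^(1/p) :=
            Real.rpow_le_rpow hnn hub (by positivity)
        _ = 2 * ‖y‖ := by
            rw [Real.mul_rpow (Real.rpow_nonneg (by norm_num) p)
              (Real.rpow_nonneg (norm_nonneg y) p), hNcancel 2 (by norm_num),
              hNcancel _ (norm_nonneg y)]
  · -- triangle inequality
    intro y z
    beta_reduce
    have hzero : Phi T p ((2:ℝ)^p * c^p) (0:Y) ^ (1/p) = 0 := by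
      rw [my_phi_zero T hp1 hc hmt, Real.zero_rpow (one_div_ne_zero hpne)]
    by_cases hy : y = 0
    · subst hy
      rw [zero_add, hzero, zero_add]
    by_cases hz : z = 0
    · subst hz
      rw [add_zero, hzero, add_zero]
    have hay : 0 < Phi T p ((2:ℝ)^p * c^p) y :=
      lt_of_lt_of_le (Real.rpow_pos_of_pos (norm_pos_iff.mpr hy) p) (my_phi_lb T hp1 hc hmt y)
    have haz : 0 < Phi T p ((2:ℝ)^p * c^p) z :=
      lt_of_lt_of_le (Real.rpow_pos_of_pos (norm_pos_iff.mpr hz) p) (my_phi_lb T hp1 hc hmt z)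
    set a := Phi T p ((2:ℝ)^p * c^p) y ^ (1/p) with hadef
    set b := Phi T p ((2:ℝ)^p * c^p) z ^ (1/p) with hbdef
    have ha : 0 < a := Real.rpow_pos_of_pos hay _
    have hb : 0 < b := Real.rpow_pos_of_pos haz _
    have hab : 0 < a + b := by linarith
    have hap : a ^ p = Phi T p ((2:ℝ)^p * c^p) y := hNp y
    have hbp : b ^ p = Phi T p ((2:ℝ)^p * c^p) z := hNp z
    -- decompose y+z
    have hyz : y + z = (a+b) • ((a/(a+b)) • (a⁻¹ • y) + (1 - a/(a+b)) • (b⁻¹ • z)) := by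
      have hbb : 1 - a/(a+b) = b/(a+b) := by field_simp; ring
      rw [hbb, smul_add, smul_smul, smul_smul, smul_smul, smul_smul]
      rw [show (a+b) * (a/(a+b)) * a⁻¹ = 1 by field_simp,
        show (a+b) * (b/(a+b)) * b⁻¹ = 1 by field_simp, one_smul, one_smul]
    have hu : Phi T p ((2:ℝ)^p * c^p) (a⁻¹ • y) ≤ 1 := by
      calc Phi T p ((2:ℝ)^p * c^p) (a⁻¹ • y) ≤ |a⁻¹|^p * Phi T p ((2:ℝ)^p * c^p) y :=
            my_phi_smul_le T hp1 hc hmt (by positivity) y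
        _ = 1 := by
            rw [abs_of_pos (by positivity : (0:ℝ) < a⁻¹), ← hap,
              ← Real.mul_rpow (by positivity) ha.le, inv_mul_cancel₀ (ne_of_gt ha),
              Real.one_rpow]
    have hv : Phi T p ((2:ℝ)^p * c^p) (b⁻¹ • z) ≤ 1 := by
      calc Phi T p ((2:ℝ)^p * c^p) (b⁻¹ • z) ≤ |b⁻¹|^p * Phi T p ((2:ℝ)^p * c^p) z :=
            my_phi_smul_le T hp1 hc hmt (by positivity) z
        _ = 1 := by
            rw [abs_of_pos (by positivity : (0:ℝ) < b⁻¹), ← hbp,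
              ← Real.mul_rpow (by positivity) hb.le, inv_mul_cancel₀ (ne_of_gt hb),
              Real.one_rpow]
    have hθ0 : 0 ≤ a/(a+b) := by positivity
    have hθ1 : a/(a+b) ≤ 1 := by rw [div_le_one hab]; linarith
    have hw := my_phi_convex T hp1 hc hmt hθ0 hθ1 (a⁻¹ • y) (b⁻¹ • z)
    have hw1 : Phi T p ((2:ℝ)^p * c^p) ((a/(a+b)) • (a⁻¹ • y) + (1 - a/(a+b)) • (b⁻¹ • z)) ≤ 1 := by
      have t1 := mul_le_mul_of_nonneg_left hu hθ0
      have t2 := mul_le_mul_of_nonneg_left hv (by linarith : (0:ℝ) ≤ 1 - a/(a+b))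
      calc Phi T p ((2:ℝ)^p * c^p) ((a/(a+b)) • (a⁻¹ • y) + (1 - a/(a+b)) • (b⁻¹ • z))
          ≤ a/(a+b) * Phi T p ((2:ℝ)^p * c^p) (a⁻¹ • y)
            + (1 - a/(a+b)) * Phi T p ((2:ℝ)^p * c^p) (b⁻¹ • z) := hw
        _ ≤ a/(a+b) * 1 + (1 - a/(a+b)) * 1 := by linarith
        _ = 1 := by ring
    have hfinal : Phi T p ((2:ℝ)^p * c^p) (y + z) ≤ (a+b)^p := by
      calc Phi T p ((2:ℝ)^p * c^p) (y + z)
          = Phi T p ((2:ℝ)^p * c^p) ((a+b) • ((a/(a+b)) • (a⁻¹ • y) + (1 - a/(a+b)) • (b⁻¹ • z))) := by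
            rw [← hyz]
        _ ≤ |a+b|^p * Phi T p ((2:ℝ)^p * c^p) ((a/(a+b)) • (a⁻¹ • y) + (1 - a/(a+b)) • (b⁻¹ • z)) :=
            my_phi_smul_le T hp1 hc hmt (ne_of_gt hab) _
        _ ≤ |a+b|^p * 1 := mul_le_mul_of_nonneg_left hw1 (Real.rpow_nonneg (abs_nonneg _) p)
        _ = (a+b)^p := by rw [mul_one, abs_of_pos hab]
    calc Phi T p ((2:ℝ)^p * c^p) (y + z) ^ (1/p) ≤ ((a+b)^p)^(1/p) :=
          Real.rpow_le_rpow (my_phi_nonneg T hp1 hc hmt _) hfinal (by positivity)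
      _ = a + b := hNcancel _ hab.le
  · -- homogeneity
    intro l y
    beta_reduce
    by_cases hl : l = 0
    · subst hl
      rw [zero_smul, my_phi_zero T hp1 hc hmt, Real.zero_rpow (one_div_ne_zero hpne),
        abs_zero, zero_mul]
    · apply le_antisymm (hsm l hl y)
      have h1 := hsm l⁻¹ (inv_ne_zero hl) (l • y)
      rw [inv_smul_smul₀ hl, abs_inv] at h1
      have h2 := mul_le_mul_of_nonneg_left h1 (abs_nonneg l)
      rw [← mul_assoc, mul_inv_cancel₀ (by simpa using hl : |l| ≠ 0), one_mul] at h2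
      exact h2
  · -- smoothness
    refine ⟨((2:ℝ)^p * c^p)^(1/p), Real.rpow_pos_of_pos (by positivity) _, ?_⟩
    intro x y
    beta_reduce
    simp only [hNp]
    have hkey := my_key T hp1 hc hmt x y
    rcases lt_trichotomy ((Phi T p ((2:ℝ)^p * c^p) (y + T x)
        + Phi T p ((2:ℝ)^p * c^p) (y - T x)) / 2 - Phi T p ((2:ℝ)^p * c^p) y) 0 with hz | hz | hz
    · rw [Real.rpow_def_of_neg hz (1/p)]
      have hcos : Real.cos (1/p * Real.pi) ≤ 0 := by
        apply Real.cos_nonpos_of_pi_div_two_le_of_le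
        · have h12 : (1/2:ℝ) ≤ 1/p := by
            rw [div_le_div_iff₀ (by norm_num) hp0]
            linarith
          nlinarith [Real.pi_pos]
        · have h11 : (1/p:ℝ) ≤ 1 := by
            rw [div_le_one hp0]
            linarith
          nlinarith [Real.pi_pos]
      have hprod := mul_nonpos_of_nonneg_of_nonpos
        (Real.exp_pos (Real.log ((Phi T p ((2:ℝ)^p * c^p) (y + T x)
          + Phi T p ((2:ℝ)^p * c^p) (y - T x)) / 2 - Phi T p ((2:ℝ)^p * c^p) y) * (1/p))).le hcos
      have hrhs : 0 ≤ ((2:ℝ)^p * c^p)^(1/p) * ‖x‖ :=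
        mul_nonneg (Real.rpow_nonneg (by positivity) _) (norm_nonneg x)
      linarith
    · rw [hz, Real.zero_rpow (one_div_ne_zero hpne)]
      positivity
    · have hle : (Phi T p ((2:ℝ)^p * c^p) (y + T x)
          + Phi T p ((2:ℝ)^p * c^p) (y - T x)) / 2 - Phi T p ((2:ℝ)^p * c^p) y
          ≤ ((2:ℝ)^p * c^p) * ‖x‖^p := by linarith
      calc ((Phi T p ((2:ℝ)^p * c^p) (y + T x)
            + Phi T p ((2:ℝ)^p * c^p) (y - T x)) / 2 - Phi T p ((2:ℝ)^p * c^p) y) ^ (1/p)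
          ≤ (((2:ℝ)^p * c^p) * ‖x‖^p)^(1/p) := Real.rpow_le_rpow hz.le hle (by positivity)
        _ = ((2:ℝ)^p * c^p)^(1/p) * ‖x‖ := by
            rw [Real.mul_rpow (by positivity) (Real.rpow_nonneg (norm_nonneg x) p),
              hNcancel _ (norm_nonneg x)]
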